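/- Let {x_k} be the RK iterates for the (possibly inconsistent) system Ãx ≈ b̃ with arbitrary initial point x_0 ∈ ℝⁿ. Then for every reference point x_* ∈ ℝⁿ and every k ≥ 0, 𝔼‖x_k − x_0ⁿ − x_*ʳ‖² ≤ (1 − 1/R̃)^k ‖x_0ʳ − x_*ʳ‖² + ‖Ã x_* − b̃‖²/σ̃_min². -/

import Mathlib

/-!
Translating by `x₀ⁿ + x⋆ʳ` leaves `Ã` unchanged and replaces `b̃` by `c = b̃ - Ãx⋆`, so the
quantity to bound is `𝔼‖y_k‖²` for the RK iterates `y_k` of `Ãy ≈ c` started at `x₀ʳ - x⋆ʳ`;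
these stay in `range(Ãᵀ)`, where `‖Ãy‖² ≥ σ̃_min² ‖y‖²`. For each row (with equality if `aᵢ ≠ 0`)
`‖aᵢ‖² ‖y - ((aᵢᵀy - cᵢ)/‖aᵢ‖²) aᵢ‖² ≤ ‖aᵢ‖² ‖y‖² + cᵢ² - (aᵢᵀy)²`, so averaging over the row
gives `𝔼‖y_{k+1}‖² ≤ (1 - 1/R̃) 𝔼‖y_k‖² + ‖c‖²/‖Ã‖_F²`. The constant `‖c‖²/σ̃_min²` is exactly the
fixed point of this affine recursion, which gives the bound by induction.
-/

open Matrix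

noncomputable section

namespace RK

/-- The Euclidean inner product on `Fin n → ℝ`. -/
def dot {n : ℕ} (v w : Fin n → ℝ) : ℝ := ∑ i, v i * w i

/-- The squared Euclidean norm on `Fin n → ℝ`. -/
def normSq {n : ℕ} (v : Fin n → ℝ) : ℝ := ∑ i, v i ^ 2

/-- The Euclidean norm on `Fin n → ℝ`. -/
def euclNorm {n : ℕ} (v : Fin n → ℝ) : ℝ := Real.sqrt (normSq v)

/-- The squared Frobenius norm of a matrix. -/
def frobSq {m n : ℕ} (A : Matrix (Fin m) (Fin n) ℝ) : ℝ := ∑ i, ∑ j, A i j ^ 2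

/-- One step of the (randomized) Kaczmarz method for the system `A x ≈ b`, using row `i`:
`x ↦ x - ((aᵢᵀ x - bᵢ) / ‖aᵢ‖²) aᵢ`. -/
def rkStep {m n : ℕ} (A : Matrix (Fin m) (Fin n) ℝ) (b : Fin m → ℝ) (i : Fin m)
    (x : Fin n → ℝ) : Fin n → ℝ :=
  x - ((dot (A i) x - b i) / normSq (A i)) • A i

/-- `rkExp A b x0 k f` is the expectation `𝔼 f(x_k)` of `f` evaluated at the `k`-th iterate of the
randomized Kaczmarz algorithm applied to `A x ≈ b` started at `x0`, where at each step the row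
index `i` is drawn independently at random with probability `‖aᵢ‖² / ‖A‖_F²`. -/
def rkExp {m n : ℕ} (A : Matrix (Fin m) (Fin n) ℝ) (b : Fin m → ℝ) (x0 : Fin n → ℝ) :
    ℕ → ((Fin n → ℝ) → ℝ) → ℝ
  | 0, f => f x0
  | k + 1, f => rkExp A b x0 k fun x => ∑ i, normSq (A i) / frobSq A * f (rkStep A b i x)

/-- The four Penrose conditions: `B` is the Moore–Penrose pseudoinverse of `A`. -/
def IsMoorePenrose {m n : ℕ} (A : Matrix (Fin m) (Fin n) ℝ)
    (B : Matrix (Fin n) (Fin m) ℝ) : Prop :=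
  A * B * A = A ∧ B * A * B = B ∧ (A * B)ᵀ = A * B ∧ (B * A)ᵀ = B * A

/-- The row space `range(Aᵀ)` of a matrix `A`. -/
def rowSpace {m n : ℕ} (A : Matrix (Fin m) (Fin n) ℝ) : Set (Fin n → ℝ) :=
  {v | ∃ u : Fin m → ℝ, v = Aᵀ.mulVec u}

/-- The null space (kernel) of a matrix `A`. -/
def nullSpace {m n : ℕ} (A : Matrix (Fin m) (Fin n) ℝ) : Set (Fin n → ℝ) :=
  {v | A.mulVec v = 0}

/-- `σ` is the smallest nonzero singular value of `A`: `σ > 0`, `σ²` is an eigenvalue of `AᵀA`,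
and `σ²` is less than or equal to every nonzero eigenvalue of `AᵀA`. -/
def IsSmallestNonzeroSingularValue {m n : ℕ} (A : Matrix (Fin m) (Fin n) ℝ) (σ : ℝ) : Prop :=
  0 < σ ∧ (∃ v : Fin n → ℝ, v ≠ 0 ∧ (Aᵀ * A).mulVec v = σ ^ 2 • v) ∧
    ∀ μ : ℝ, μ ≠ 0 → (∃ v : Fin n → ℝ, v ≠ 0 ∧ (Aᵀ * A).mulVec v = μ • v) → σ ^ 2 ≤ μ

variable {m n : ℕ}

lemma dot_eq_dotProduct (v w : Fin n → ℝ) : dot v w = v ⬝ᵥ w := rfl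

lemma normSq_eq_dotProduct (v : Fin n → ℝ) : normSq v = v ⬝ᵥ v := by
  simp only [normSq, dotProduct, sq]

lemma normSq_nonneg (v : Fin n → ℝ) : 0 ≤ normSq v :=
  Finset.sum_nonneg fun _ _ => sq_nonneg _

lemma normSq_pos {v : Fin n → ℝ} (hv : v ≠ 0) : 0 < normSq v := by
  refine (normSq_nonneg v).lt_of_ne fun h => hv ?_
  rw [normSq_eq_dotProduct] at h
  exact dotProduct_self_eq_zero.1 h.symm

lemma normSq_sub_comm (v w : Fin n → ℝ) : normSq (v - w) = normSq (w - v) := by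
  rw [← neg_sub, normSq_eq_dotProduct, normSq_eq_dotProduct, neg_dotProduct, dotProduct_neg,
    neg_neg]

lemma normSq_sub_smul (v a : Fin n → ℝ) (t : ℝ) :
    normSq (v - t • a) = normSq v - 2 * t * dot a v + t ^ 2 * normSq a := by
  simp only [normSq_eq_dotProduct, dot_eq_dotProduct, sub_dotProduct, dotProduct_sub,
    smul_dotProduct, dotProduct_smul, smul_eq_mul, dotProduct_comm v a]
  ring

lemma norm_toLp_sq (v : Fin n → ℝ) :
    ‖(WithLp.toLp 2 v : EuclideanSpace ℝ (Fin n))‖ ^ 2 = normSq v := by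
  simp [EuclideanSpace.norm_sq_eq, normSq]

lemma frobSq_eq_sum_normSq (A : Matrix (Fin m) (Fin n) ℝ) : frobSq A = ∑ i, normSq (A i) := rfl

lemma frobSq_nonneg (A : Matrix (Fin m) (Fin n) ℝ) : 0 ≤ frobSq A :=
  Finset.sum_nonneg fun i _ => normSq_nonneg (A i)

lemma normSq_mulVec (A : Matrix (Fin m) (Fin n) ℝ) (v : Fin n → ℝ) :
    normSq (A *ᵥ v) = v ⬝ᵥ (Aᵀ * A) *ᵥ v := by
  rw [normSq_eq_dotProduct, ← mulVec_mulVec, dotProduct_mulVec v, vecMul_transpose]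

lemma normSq_mulVec_le (A : Matrix (Fin m) (Fin n) ℝ) (v : Fin n → ℝ) :
    normSq (A *ᵥ v) ≤ frobSq A * normSq v := by
  rw [frobSq_eq_sum_normSq, Finset.sum_mul]
  exact Finset.sum_le_sum fun i _ => Finset.sum_mul_sq_le_sq_mul_sq Finset.univ (A i) v

theorem _root_.LinearMap.IsSymmetric.mul_norm_sq_le_inner_map_self_of_mem_ker_orthogonal
    {E : Type*} [NormedAddCommGroup E] [InnerProductSpace ℝ E] [FiniteDimensional ℝ E]
    {T : E →ₗ[ℝ] E} (hT : T.IsSymmetric) {c : ℝ}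
    (hc : ∀ μ : ℝ, μ ≠ 0 → ∀ v, v ≠ 0 → T v = μ • v → c ≤ μ)
    {x : E} (hx : x ∈ (LinearMap.ker T)ᗮ) :
    c * ‖x‖ ^ 2 ≤ inner ℝ x (T x) := by
  set b := hT.eigenvectorBasis rfl
  set μ := hT.eigenvalues rfl
  have hTb : ∀ i, T (b i) = μ i • b i := hT.apply_eigenvectorBasis rfl
  have hterm : ∀ i, c * inner ℝ (b i) x ^ 2 ≤ μ i * inner ℝ (b i) x ^ 2 := by
    intro i
    rcases eq_or_ne (μ i) 0 with h0 | h0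
    · have hker : b i ∈ LinearMap.ker T := by simp [hTb, h0]
      simp [(Submodule.mem_orthogonal _ _).1 hx _ hker]
    · exact mul_le_mul_of_nonneg_right (hc _ h0 _ (b.orthonormal.ne_zero i) (hTb i))
        (sq_nonneg _)
  calc c * ‖x‖ ^ 2 = ∑ i, c * inner ℝ (b i) x ^ 2 := by
        rw [← b.sum_sq_inner_right, Finset.mul_sum]
    _ ≤ ∑ i, μ i * inner ℝ (b i) x ^ 2 := Finset.sum_le_sum fun i _ => hterm i
    _ = inner ℝ x (T x) := by
        rw [← b.sum_inner_mul_inner]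
        refine Finset.sum_congr rfl fun i _ => ?_
        rw [← hT, hTb, real_inner_smul_left, real_inner_comm x]
        ring

lemma sq_mul_normSq_le_normSq_mulVec {A : Matrix (Fin m) (Fin n) ℝ} {σ : ℝ}
    (hσ : IsSmallestNonzeroSingularValue A σ) {v : Fin n → ℝ} (hv : v ∈ rowSpace A) :
    σ ^ 2 * normSq v ≤ normSq (A *ᵥ v) := by
  obtain ⟨u, rfl⟩ := hv
  have hT : (toEuclideanLin (Aᵀ * A)).IsSymmetric := by
    rw [isSymmetric_toEuclideanLin_iff]
    simpa [conjTranspose_eq_transpose_of_trivial] using isHermitian_conjTranspose_mul_self A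
  have hc : ∀ μ : ℝ, μ ≠ 0 → ∀ w, w ≠ 0 → toEuclideanLin (Aᵀ * A) w = μ • w → σ ^ 2 ≤ μ := by
    intro μ hμ w hw hTw
    refine hσ.2.2 μ hμ ⟨w.ofLp, by simpa using hw, ?_⟩
    simpa using congrArg WithLp.ofLp hTw
  have hx : WithLp.toLp 2 (Aᵀ *ᵥ u) ∈ (LinearMap.ker (toEuclideanLin (Aᵀ * A)))ᗮ := by
    refine (Submodule.mem_orthogonal _ _).2 fun y hy => ?_
    have hAy : A *ᵥ y.ofLp = 0 := by
      have h : y.ofLp ∈ LinearMap.ker (Aᵀ * A).mulVecLin :=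
        congrArg WithLp.ofLp (LinearMap.mem_ker.1 hy)
      rwa [ker_mulVecLin_transpose_mul_self, LinearMap.mem_ker, mulVecLin_apply] at h
    rw [EuclideanSpace.inner_eq_star_dotProduct, star_trivial, WithLp.ofLp_toLp, mulVec_transpose,
      ← dotProduct_mulVec, hAy, dotProduct_zero]
  calc σ ^ 2 * normSq (Aᵀ *ᵥ u) = σ ^ 2 * ‖WithLp.toLp 2 (Aᵀ *ᵥ u)‖ ^ 2 := by
        rw [norm_toLp_sq]
    _ ≤ inner ℝ (WithLp.toLp 2 (Aᵀ *ᵥ u)) (toEuclideanLin (Aᵀ * A) (WithLp.toLp 2 (Aᵀ *ᵥ u))) :=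
        hT.mul_norm_sq_le_inner_map_self_of_mem_ker_orthogonal hc hx
    _ = normSq (A *ᵥ Aᵀ *ᵥ u) := by
        rw [normSq_mulVec A, toLpLin_toLp, EuclideanSpace.inner_eq_star_dotProduct, star_trivial,
          WithLp.ofLp_toLp, WithLp.ofLp_toLp, toLin'_apply, dotProduct_comm]

lemma sq_le_frobSq {A : Matrix (Fin m) (Fin n) ℝ} {σ : ℝ}
    (hσ : IsSmallestNonzeroSingularValue A σ) : σ ^ 2 ≤ frobSq A := by
  obtain ⟨w, hw0, hw⟩ := hσ.2.1
  refine le_of_mul_le_mul_right ?_ (normSq_pos hw0)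
  calc σ ^ 2 * normSq w = normSq (A *ᵥ w) := by
        rw [normSq_mulVec, hw, dotProduct_smul, smul_eq_mul, normSq_eq_dotProduct]
    _ ≤ frobSq A * normSq w := normSq_mulVec_le A w

lemma frobSq_pos {A : Matrix (Fin m) (Fin n) ℝ} {σ : ℝ}
    (hσ : IsSmallestNonzeroSingularValue A σ) : 0 < frobSq A :=
  (pow_pos hσ.1 2).trans_le (sq_le_frobSq hσ)

lemma rowSpace_eq_range (A : Matrix (Fin m) (Fin n) ℝ) :
    rowSpace A = LinearMap.range Aᵀ.mulVecLin := by
  ext v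
  simp only [rowSpace, Set.mem_ofPred_eq, SetLike.mem_coe, LinearMap.mem_range, mulVecLin_apply,
    eq_comm]

lemma rkStep_mem_rowSpace (A : Matrix (Fin m) (Fin n) ℝ) (b : Fin m → ℝ) (i : Fin m)
    {x : Fin n → ℝ} (hx : x ∈ rowSpace A) : rkStep A b i x ∈ rowSpace A := by
  rw [rowSpace_eq_range] at hx ⊢
  refine sub_mem hx (Submodule.smul_mem _ _ ⟨Pi.single i 1, ?_⟩)
  rw [mulVecLin_apply, mulVec_single_one, col_transpose]
  rfl

lemma rkStep_sub (A : Matrix (Fin m) (Fin n) ℝ) (b : Fin m → ℝ) (i : Fin m) (x z : Fin n → ℝ) :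
    rkStep A b i x - z = rkStep A (b - A *ᵥ z) i (x - z) := by
  have h : dot (A i) (x - z) - (b - A *ᵥ z) i = dot (A i) x - b i := by
    rw [dot_eq_dotProduct, dotProduct_sub, Pi.sub_apply, mulVec, dot_eq_dotProduct]
    ring
  simp only [rkStep, h]
  abel

lemma normSq_mul_normSq_rkStep_le (A : Matrix (Fin m) (Fin n) ℝ) (b : Fin m → ℝ) (i : Fin m)
    (x : Fin n → ℝ) :
    normSq (A i) * normSq (rkStep A b i x) ≤
      normSq (A i) * normSq x + b i ^ 2 - dot (A i) x ^ 2 := by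
  rcases eq_or_ne (A i) 0 with h | h
  · -- a zero row leaves `x` unchanged, since `t / 0 = 0`
    simp [h, normSq, dot]
    positivity
  · have ha : normSq (A i) ≠ 0 := (normSq_pos h).ne'
    refine le_of_eq ?_
    rw [rkStep, normSq_sub_smul]
    field_simp
    ring

def rkTransition (A : Matrix (Fin m) (Fin n) ℝ) (b : Fin m → ℝ) (f : (Fin n → ℝ) → ℝ)
    (x : Fin n → ℝ) : ℝ :=
  ∑ i, normSq (A i) / frobSq A * f (rkStep A b i x)

section rkExp

variable {A : Matrix (Fin m) (Fin n) ℝ} {b : Fin m → ℝ} {x0 : Fin n → ℝ}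

lemma rkExp_succ (k : ℕ) (f : (Fin n → ℝ) → ℝ) :
    rkExp A b x0 (k + 1) f = rkExp A b x0 k (rkTransition A b f) := rfl

lemma rkTransition_comp_sub (z : Fin n → ℝ) (f : (Fin n → ℝ) → ℝ) :
    rkTransition A b (fun x => f (x - z)) = fun x => rkTransition A (b - A *ᵥ z) f (x - z) := by
  funext x
  simp only [rkTransition, rkStep_sub]

lemma rkExp_comp_sub (z : Fin n → ℝ) :
    ∀ (k : ℕ) (f : (Fin n → ℝ) → ℝ),
      rkExp A b x0 k (fun x => f (x - z)) = rkExp A (b - A *ᵥ z) (x0 - z) k f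
  | 0, _ => rfl
  | k + 1, f => by rw [rkExp_succ, rkTransition_comp_sub, rkExp_comp_sub z k]; rfl

lemma rkTransition_affine (hA : frobSq A ≠ 0) (a c : ℝ) (f : (Fin n → ℝ) → ℝ) :
    rkTransition A b (fun x => a * f x + c) = fun x => a * rkTransition A b f x + c := by
  have hw : ∑ i, normSq (A i) / frobSq A = 1 := by
    rw [← Finset.sum_div, ← frobSq_eq_sum_normSq, div_self hA]
  funext x
  simp only [rkTransition, mul_add, Finset.sum_add_distrib, ← Finset.sum_mul, hw, one_mul,
    Finset.mul_sum]
  congr 1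
  exact Finset.sum_congr rfl fun i _ => by ring

lemma rkExp_affine (hA : frobSq A ≠ 0) :
    ∀ (k : ℕ) (a c : ℝ) (f : (Fin n → ℝ) → ℝ),
      rkExp A b x0 k (fun x => a * f x + c) = a * rkExp A b x0 k f + c
  | 0, _, _, _ => rfl
  | k + 1, a, c, f => by
    rw [rkExp_succ, rkTransition_affine hA, rkExp_affine hA k, rkExp_succ]

lemma rkExp_mono_of_invariant {S : Set (Fin n → ℝ)} (hx0 : x0 ∈ S)
    (hS : ∀ i, ∀ x ∈ S, rkStep A b i x ∈ S) :
    ∀ (k : ℕ) {f g : (Fin n → ℝ) → ℝ}, (∀ x ∈ S, f x ≤ g x) → rkExp A b x0 k f ≤ rkExp A b x0 k g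
  | 0, _, _, hfg => hfg x0 hx0
  | k + 1, _, _, hfg => rkExp_mono_of_invariant hx0 hS k fun x hx =>
      Finset.sum_le_sum fun i _ => mul_le_mul_of_nonneg_left (hfg _ (hS i x hx))
        (div_nonneg (normSq_nonneg _) (frobSq_nonneg A))

lemma rkExp_le_of_drift {S : Set (Fin n → ℝ)} {f : (Fin n → ℝ) → ℝ} {q C D : ℝ}
    (hA : frobSq A ≠ 0) (hx0 : x0 ∈ S) (hS : ∀ i, ∀ x ∈ S, rkStep A b i x ∈ S)
    (hq : 0 ≤ q) (hD₀ : 0 ≤ D) (hD : q * D + C ≤ D)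
    (hdrift : ∀ x ∈ S, rkTransition A b f x ≤ q * f x + C) :
    ∀ k : ℕ, rkExp A b x0 k f ≤ q ^ k * f x0 + D
  | 0 => by
    rw [pow_zero, one_mul]
    exact le_add_of_nonneg_right hD₀
  | k + 1 => calc
      rkExp A b x0 (k + 1) f ≤ rkExp A b x0 k (fun x => q * f x + C) :=
        rkExp_mono_of_invariant hx0 hS k hdrift
      _ = q * rkExp A b x0 k f + C := rkExp_affine hA k q C f
      _ ≤ q * (q ^ k * f x0 + D) + C := by
        gcongr
        exact rkExp_le_of_drift hA hx0 hS hq hD₀ hD hdrift k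
      _ ≤ q ^ (k + 1) * f x0 + D := by
        rw [pow_succ]
        linarith

end rkExp

lemma rkTransition_normSq_le {A : Matrix (Fin m) (Fin n) ℝ} (b : Fin m → ℝ) {σ : ℝ}
    (hσ : IsSmallestNonzeroSingularValue A σ) {y : Fin n → ℝ} (hy : y ∈ rowSpace A) :
    rkTransition A b normSq y ≤ (1 - σ ^ 2 / frobSq A) * normSq y + normSq b / frobSq A := by
  have hA := frobSq_pos hσ
  have hsum : ∑ i, normSq (A i) * normSq (rkStep A b i y)
      ≤ frobSq A * normSq y + normSq b - normSq (A *ᵥ y) :=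
    calc ∑ i, normSq (A i) * normSq (rkStep A b i y)
        ≤ ∑ i, (normSq (A i) * normSq y + b i ^ 2 - dot (A i) y ^ 2) :=
          Finset.sum_le_sum fun i _ => normSq_mul_normSq_rkStep_le A b i y
      _ = frobSq A * normSq y + normSq b - normSq (A *ᵥ y) := by
          simp only [Finset.sum_sub_distrib, Finset.sum_add_distrib, ← Finset.sum_mul]
          rfl
  calc rkTransition A b normSq y = (∑ i, normSq (A i) * normSq (rkStep A b i y)) / frobSq A := by
        simp only [rkTransition, Finset.sum_div, div_mul_eq_mul_div]
    _ ≤ (frobSq A * normSq y + normSq b - σ ^ 2 * normSq y) / frobSq A := by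
        gcongr
        linarith [hsum, sq_mul_normSq_le_normSq_mulVec hσ hy]
    _ = (1 - σ ^ 2 / frobSq A) * normSq y + normSq b / frobSq A := by
        field_simp
        ring

theorem rkExp_normSq_le_of_mem_rowSpace {A : Matrix (Fin m) (Fin n) ℝ} (b : Fin m → ℝ) {σ : ℝ}
    (hσ : IsSmallestNonzeroSingularValue A σ) {x0 : Fin n → ℝ} (hx0 : x0 ∈ rowSpace A) (k : ℕ) :
    rkExp A b x0 k normSq ≤ (1 - σ ^ 2 / frobSq A) ^ k * normSq x0 + normSq b / σ ^ 2 := by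
  have hA := frobSq_pos hσ
  have hσ0 : σ ≠ 0 := hσ.1.ne'
  refine rkExp_le_of_drift hA.ne' hx0 (fun i _ => rkStep_mem_rowSpace A b i) ?_
    (div_nonneg (normSq_nonneg b) (sq_nonneg σ))
    ?_ (fun y => rkTransition_normSq_le b hσ) k
  · exact sub_nonneg.2 ((div_le_one hA).2 (sq_le_frobSq hσ))
  · refine le_of_eq ?_
    field_simp
    ring

theorem rk_arbitrary_reference_point_general {m n : ℕ}
    (At : Matrix (Fin m) (Fin n) ℝ) (bt : Fin m → ℝ)
    (σmin : ℝ) (hσ : IsSmallestNonzeroSingularValue At σmin)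
    (x0 xstar x0r x0n xsr xsn : Fin n → ℝ)
    (hx0r : x0r ∈ rowSpace At) (hx0n : x0n ∈ nullSpace At) (hx0 : x0 = x0r + x0n)
    (hxsr : xsr ∈ rowSpace At) (hxsn : xsn ∈ nullSpace At) (hxs : xstar = xsr + xsn)
    (k : ℕ) :
    rkExp At bt x0 k (fun x => normSq (x - x0n - xsr)) ≤
      (1 - σmin ^ 2 / frobSq At) ^ k * normSq (x0r - xsr)
        + normSq (At.mulVec xstar - bt) / σmin ^ 2 := by
  have hshift : At *ᵥ (x0n + xsr) = At *ᵥ xstar := by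
    rw [hxs, mulVec_add, mulVec_add, show At *ᵥ x0n = 0 from hx0n,
      show At *ᵥ xsn = 0 from hxsn, zero_add, add_zero]
  have hstart : x0 - (x0n + xsr) = x0r - xsr := by
    rw [hx0]
    abel
  have hmem : x0r - xsr ∈ rowSpace At := by
    rw [rowSpace_eq_range] at hx0r hxsr ⊢
    exact sub_mem hx0r hxsr
  calc rkExp At bt x0 k (fun x => normSq (x - x0n - xsr))
      = rkExp At (bt - At *ᵥ xstar) (x0r - xsr) k normSq := by
        simp_rw [sub_sub]
        rw [rkExp_comp_sub (x0n + xsr) k normSq, hshift, hstart]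
    _ ≤ (1 - σmin ^ 2 / frobSq At) ^ k * normSq (x0r - xsr)
          + normSq (bt - At *ᵥ xstar) / σmin ^ 2 :=
        rkExp_normSq_le_of_mem_rowSpace _ hσ hmem k
    _ = _ := by rw [normSq_sub_comm bt]

/-- **Theorem 2.2 (arbitrary reference point).** For the RK iterates of the possibly inconsistent
system `Ãx ≈ b̃` with arbitrary initial point `x₀`, and any reference point `x⋆`,
`𝔼‖x_k − x₀ⁿ − x⋆ʳ‖² ≤ (1 − 1/R̃)^k ‖x₀ʳ − x⋆ʳ‖² + ‖Ã x⋆ − b̃‖² / σ̃_min²`,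
where `R̃ = ‖Ã‖_F² / σ̃_min²`. -/
theorem rk_arbitrary_reference_point {m n : ℕ}
    (At : Matrix (Fin m) (Fin n) ℝ) (bt : Fin m → ℝ)
    (hAt : At ≠ 0) (hrows : ∀ i, At i ≠ 0)
    (σmin : ℝ) (hσ : IsSmallestNonzeroSingularValue At σmin)
    (x0 xstar x0r x0n xsr xsn : Fin n → ℝ)
    (hx0r : x0r ∈ rowSpace At) (hx0n : x0n ∈ nullSpace At) (hx0 : x0 = x0r + x0n)
    (hxsr : xsr ∈ rowSpace At) (hxsn : xsn ∈ nullSpace At) (hxs : xstar = xsr + xsn)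
    (k : ℕ) :
    rkExp At bt x0 k (fun x => normSq (x - x0n - xsr)) ≤
      (1 - σmin ^ 2 / frobSq At) ^ k * normSq (x0r - xsr)
        + normSq (At.mulVec xstar - bt) / σmin ^ 2 :=
  rk_arbitrary_reference_point_general At bt σmin hσ x0 xstar x0r x0n xsr xsn hx0r hx0n hx0 hxsr
    hxsn hxs k

end RK
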